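/- Let (R, m) be a one-dimensional singular Cohen--Macaulay local ring which is generically Gorenstein, and suppose 0 \to L \to M \to N \to 0 is an exact sequence of maximal Cohen--Macaulay R-modules. If M is a first syzygy of a maximal Cohen--Macaulay module and M has no free summand, then L is also a first syzygy of a maximal Cohen--Macaulay module and has no free summand. -/

import Mathlib

open IsLocalRing

/-- `M` is a maximal Cohen–Macaulay module over the one-dimensional local ring `R`:
finitely generated and some element of the maximal ideal acts regularly on `M`
(equivalently, `M = 0` or `depth M = 1`). -/
def IsMCM (R : Type*) [CommRing R] [IsLocalRing R] (M : Type*) [AddCommGroup M] [Module R M] : Prop :=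
  Module.Finite R M ∧ ∃ x ∈ maximalIdeal R, IsSMulRegular M x

/-- `R` is a direct summand of `M`, i.e. `M` has a nonzero free direct summand. -/
def HasFreeSummand (R : Type*) [CommRing R] (M : Type*) [AddCommGroup M] [Module R M] : Prop :=
  ∃ (p : M →ₗ[R] R) (s : R →ₗ[R] M), p ∘ₗ s = LinearMap.id

/-- `M` is a first syzygy of a maximal Cohen–Macaulay module: there is an exact
sequence `0 → M → Rⁿ → N → 0` with `N` maximal Cohen–Macaulay. -/
def IsSyzygyOfMCM (R : Type*) [CommRing R] [IsLocalRing R] (M : Type*) [AddCommGroup M] [Module R M] : Prop :=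
  ∃ (n : ℕ) (f : M →ₗ[R] (Fin n → R)), Function.Injective f ∧
    IsMCM R ((Fin n → R) ⧸ LinearMap.range f)

/-- `R` is generically Gorenstein: the localization at each minimal prime is a
(zero-dimensional) Gorenstein, i.e. self-injective, local ring. -/
def GenericallyGorenstein (R : Type*) [CommRing R] : Prop :=
  ∀ p ∈ minimalPrimes R, ∀ (hp : p.IsPrime),
    letI := hp
    Module.Injective (Localization.AtPrime p) (Localization.AtPrime p)


-- auxiliary
section AuxSection

section Aux

variable {R : Type*} [CommRing R] [IsNoetherianRing R] [IsLocalRing R]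

lemma aux_isSMulRegular_of_smul_eq_zero {M : Type*} [AddCommGroup M] [Module R M] {x : R}
    (h : ∀ m : M, x • m = 0 → m = 0) : IsSMulRegular M x := fun a b hab =>
  sub_eq_zero.mp (h (a - b) (by rw [smul_sub, show x • a = x • b from hab, sub_self]))

lemma aux_smul_cancel {M : Type*} [AddCommGroup M] [Module R M] {t : R}
    (h : IsSMulRegular M t) {m : M} (hm : t • m = 0) : m = 0 :=
  h (show t • m = t • 0 by rw [hm, smul_zero])

lemma aux_minimal_nzd {p : Ideal R} (hp : p ∈ minimalPrimes R) {x : R}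
    (hx : x ∈ p) (hnzd : x ∈ nonZeroDivisors R) : False := by
  haveI hpp : p.IsPrime := hp.1.1
  open IsLocalization.AtPrime Localization.AtPrime in
  have hnil : IsNilpotent (algebraMap R (Localization p.primeCompl) x) := by
    exact absurd hnzd (Set.disjoint_left.mp (Ideal.disjoint_nonZeroDivisors_of_mem_minimalPrimes hp) hx)
  obtain ⟨n, hn⟩ := hnil
  rw [← map_pow] at hn
  obtain ⟨⟨s, hs⟩, hsx⟩ := (IsLocalization.map_eq_zero_iff p.primeCompl _ _).mp hn
  have hs0 : s = 0 := mem_nonZeroDivisors_iff_right.mp (pow_mem hnzd n) s hsx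
  exact hs (hs0 ▸ p.zero_mem)

lemma aux_prime_eq_maximal (hdim : ringKrullDim R = 1) {p : Ideal R} (hpp : p.IsPrime)
    {x : R} (hx : x ∈ p) (hnzd : x ∈ nonZeroDivisors R) : p = maximalIdeal R := by
  by_contra hne
  have hlt : p < maximalIdeal R :=
    lt_of_le_of_ne (IsLocalRing.le_maximalIdeal hpp.ne_top) hne
  obtain ⟨q, hq, hqp⟩ := Ideal.exists_minimalPrimes_le (I := (⊥ : Ideal R)) (J := p) bot_le
  haveI hqq : q.IsPrime := hq.1.1
  have hqlt : q < p := lt_of_le_of_ne hqp (fun h => aux_minimal_nzd (h ▸ hq) hx hnzd)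
  let P0 : PrimeSpectrum R := ⟨q, hqq⟩
  let P1 : PrimeSpectrum R := ⟨p, hpp⟩
  let P2 : PrimeSpectrum R := ⟨maximalIdeal R, inferInstance⟩
  have h01 : P0 < P1 := hqlt
  have h12 : P1 < P2 := hlt
  let c : LTSeries (PrimeSpectrum R) := ((RelSeries.singleton _ P0).snoc P1 h01).snoc P2 (by have h := lt_of_eq_of_lt (RelSeries.last_snoc (RelSeries.singleton {(a, b) : PrimeSpectrum R × PrimeSpectrum R | a < b} P0) P1 h01) h12; exact h)
  have hc := Order.LTSeries.length_le_krullDim c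
  have hc2 : c.length = 2 := rfl
  rw [hc2] at hc
  have hc' : ((2 : ℕ) : WithBot (WithTop ℕ)) ≤ ringKrullDim R := hc
  rw [hdim] at hc'
  exact absurd hc' (by norm_cast)

lemma aux_tf (hdim : ringKrullDim R = 1)
    {P : Type*} [AddCommGroup P] [Module R P]
    (hreg : ∃ y ∈ maximalIdeal R, IsSMulRegular P y)
    {s : R} (hs : s ∈ nonZeroDivisors R) : IsSMulRegular P s := by
  obtain ⟨y, hym, hy⟩ := hreg
  apply aux_isSMulRegular_of_smul_eq_zero
  intro c hc
  by_contra hc0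
  obtain ⟨Q, hQa, hle⟩ :=
    exists_le_isAssociatedPrime_of_isNoetherianRing (R := R) c hc0
  obtain ⟨hQp, c', hQ⟩ := isAssociatedPrime_iff.mp hQa
  have hsQ : s ∈ Q := hle (Submodule.mem_colon_singleton.mpr ((Submodule.mem_bot R).mpr hc))
  have hQm : Q = maximalIdeal R := aux_prime_eq_maximal hdim hQp hsQ hs
  have hyQ : y ∈ Q := hQm ▸ hym
  rw [hQ, Submodule.mem_colon_singleton, Submodule.mem_bot] at hyQ
  have hc'0 : c' = 0 := hy (a₁ := c') (a₂ := 0) (by show y • c' = y • 0; rw [hyQ, smul_zero])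
  apply hQp.ne_top
  rw [hQ, hc'0]
  rw [Submodule.colon_singleton_zero]

lemma aux_socle (hdim : ringKrullDim R = 1) {x : R} (hx : x ∈ maximalIdeal R)
    (hnzd : x ∈ nonZeroDivisors R) :
    ∃ c : R, c ∉ Ideal.span {x} ∧ ∀ r ∈ maximalIdeal R, r * c ∈ Ideal.span {x} := by
  have hxtop : Ideal.span {x} ≠ ⊤ := by
    rw [Ne, Ideal.span_singleton_eq_top]
    exact fun hu => hx.out hu
  haveI : Nontrivial (R ⧸ Ideal.span {x}) :=
    Submodule.Quotient.nontrivial_iff.mpr hxtop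
  obtain ⟨Q, hQa⟩ := associatedPrimes.nonempty R (R ⧸ Ideal.span {x})
  obtain ⟨hQp, c', hQ⟩ := isAssociatedPrime_iff.mp hQa
  obtain ⟨c, rfl⟩ := Submodule.Quotient.mk_surjective _ c'
  have hc'ne : (Submodule.Quotient.mk c : R ⧸ Ideal.span {x}) ≠ 0 := by
    intro h0
    apply hQp.ne_top
    rw [hQ, h0]
    rw [Submodule.colon_singleton_zero]
  have hxQ : x ∈ Q := by
    rw [hQ, Submodule.mem_colon_singleton, Submodule.mem_bot, ← Submodule.Quotient.mk_smul,
      Submodule.Quotient.mk_eq_zero]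
    exact Ideal.mem_span_singleton'.mpr ⟨c, mul_comm x c ▸ rfl⟩
  have hQm : Q = maximalIdeal R := aux_prime_eq_maximal hdim hQp hxQ hnzd
  refine ⟨c, ?_, ?_⟩
  · intro hmem
    exact hc'ne ((Submodule.Quotient.mk_eq_zero _).mpr hmem)
  · intro r hr
    have hrQ : r ∈ Q := hQm ▸ hr
    rw [hQ, Submodule.mem_colon_singleton, Submodule.mem_bot, ← Submodule.Quotient.mk_smul,
      Submodule.Quotient.mk_eq_zero] at hrQ
    simpa [smul_eq_mul] using hrQ

end Aux

theorem stmt8' (R : Type*) [CommRing R] [IsNoetherianRing R] [IsLocalRing R]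
    (hdim : ringKrullDim R = 1)
    (hdepth : ∃ x ∈ maximalIdeal R, x ∈ nonZeroDivisors R)
    (L M N : Type*) [AddCommGroup L] [Module R L] [AddCommGroup M] [Module R M]
    [AddCommGroup N] [Module R N]
    (hL : Module.Finite R L ∧ ∃ x ∈ maximalIdeal R, IsSMulRegular L x)
    (hN : Module.Finite R N ∧ ∃ x ∈ maximalIdeal R, IsSMulRegular N x)
    (f : L →ₗ[R] M) (g : M →ₗ[R] N)
    (hf : Function.Injective f) (hg : Function.Surjective g)
    (hexact : LinearMap.ker g = LinearMap.range f)
    (hMsyz : ∃ (n : ℕ) (ι : M →ₗ[R] (Fin n → R)), Function.Injective ι ∧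
      (Module.Finite R ((Fin n → R) ⧸ LinearMap.range ι) ∧
        ∃ x ∈ maximalIdeal R, IsSMulRegular ((Fin n → R) ⧸ LinearMap.range ι) x))
    (hMfree : ¬ ∃ (p : M →ₗ[R] R) (s : R →ₗ[R] M), p ∘ₗ s = LinearMap.id) :
    (∃ (n : ℕ) (φ : L →ₗ[R] (Fin n → R)), Function.Injective φ ∧
      (Module.Finite R ((Fin n → R) ⧸ LinearMap.range φ) ∧
        ∃ x ∈ maximalIdeal R, IsSMulRegular ((Fin n → R) ⧸ LinearMap.range φ) x)) ∧
    ¬ ∃ (p : L →ₗ[R] R) (s : R →ₗ[R] L), p ∘ₗ s = LinearMap.id := by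
  classical
  obtain ⟨n, ι, hι, hQfin, hQreg⟩ := hMsyz
  obtain ⟨x, hxm, hxnzd⟩ := hdepth
  have tfQ : ∀ {t : R}, t ∈ nonZeroDivisors R →
      IsSMulRegular ((Fin n → R) ⧸ LinearMap.range ι) t := fun ht => aux_tf hdim hQreg ht
  have tfN : ∀ {t : R}, t ∈ nonZeroDivisors R → IsSMulRegular N t :=
    fun ht => aux_tf hdim hN.2 ht
  have tfL : ∀ {t : R}, t ∈ nonZeroDivisors R → IsSMulRegular L t :=
    fun ht => aux_tf hdim hL.2 ht
  have gf0 : ∀ l : L, g (f l) = 0 := by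
    intro l
    have : f l ∈ LinearMap.ker g := by
      rw [hexact]; exact LinearMap.mem_range_self f l
    exact LinearMap.mem_ker.mp this
  -- key descent: if t • u lies in the image of ι then u does, provided t is a nzd
  have descendQ : ∀ (u : Fin n → R) (t : R), t ∈ nonZeroDivisors R →
      (∃ w : M, ι w = t • u) → ∃ w' : M, ι w' = u := by
    intro u t ht ⟨w, hw⟩
    have h1 : t • (Submodule.Quotient.mk (p := LinearMap.range ι) u) = 0 := by
      rw [← Submodule.Quotient.mk_smul, ← hw]
      exact (Submodule.Quotient.mk_eq_zero _).mpr ⟨w, rfl⟩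
    have h2 : (Submodule.Quotient.mk (p := LinearMap.range ι) u) = 0 :=
      aux_smul_cancel (tfQ ht) h1
    obtain ⟨w', hw'⟩ := (Submodule.Quotient.mk_eq_zero _).mp h2
    exact ⟨w', hw'⟩
  -- key descent into the image of f
  have descendM : ∀ (w : M) (t : R), t ∈ nonZeroDivisors R →
      (∃ l : L, f l = t • w) → ∃ l' : L, f l' = w := by
    intro w t ht ⟨l, hl⟩
    have h5 : t • g w = 0 := by rw [← map_smul, ← hl, gf0]
    have h6 : g w = 0 := aux_smul_cancel (tfN ht) h5
    have : w ∈ LinearMap.range f := by rw [← hexact]; exact LinearMap.mem_ker.mpr h6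
    exact this
  constructor
  · -- Part A : L is a syzygy of an MCM module
    refine ⟨n, ι ∘ₗ f, hι.comp hf, inferInstance, x, hxm, ?_⟩
    apply aux_isSMulRegular_of_smul_eq_zero
    intro q hq
    obtain ⟨q₀, rfl⟩ := Submodule.Quotient.mk_surjective _ q
    rw [← Submodule.Quotient.mk_smul, Submodule.Quotient.mk_eq_zero] at hq
    rw [Submodule.Quotient.mk_eq_zero]
    obtain ⟨l, hl⟩ := hq
    obtain ⟨w, hw⟩ := descendQ q₀ x hxnzd ⟨f l, hl⟩
    have hxw : f l = x • w := by
      apply hι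
      simp only [map_smul, hw]
      exact hl
    obtain ⟨l', hl'⟩ := descendM w x hxnzd ⟨l, hxw⟩
    exact ⟨l', by rw [LinearMap.comp_apply, hl', hw]⟩
  · -- Part B : L has no free summand
    rintro ⟨p, s, hps⟩
    have hps1 : p (s 1) = 1 := by
      have := LinearMap.congr_fun hps 1
      simpa using this
    set e₀ : L := s 1 with he₀
    set e : Fin n → R := ι (f e₀) with he
    -- the annihilator of e is zero
    have hann : ∀ r : R, r • e = 0 → r = 0 := by
      intro r hr
      have h1 : ι (f (r • e₀)) = ι (f 0) := by
        rw [map_smul, map_smul, map_zero, map_zero, ← he]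
        exact hr
      have h2 : r • e₀ = 0 := hf (hι h1)
      have := congrArg p h2
      rwa [map_smul, hps1, smul_eq_mul, mul_one, map_zero] at this
    -- all coordinates of e lie in the maximal ideal
    have hcoord : ∀ i : Fin n, e i ∈ maximalIdeal R := by
      intro i
      by_contra hcontra
      apply hMfree
      have hu : IsUnit (e i) := by
        by_contra hu
        exact hcontra ((IsLocalRing.mem_maximalIdeal _).mpr hu)
      obtain ⟨v, hv⟩ := hu.exists_left_inv
      refine ⟨(LinearMap.proj i) ∘ₗ ι, LinearMap.toSpanSingleton R M (v • f e₀), ?_⟩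
      apply LinearMap.ext_ring
      simp only [LinearMap.comp_apply, LinearMap.toSpanSingleton_apply, one_smul, map_smul,
        LinearMap.proj_apply, Pi.smul_apply, smul_eq_mul, LinearMap.id_coe, id_eq]
      exact hv
    -- saturation property of R·e in Rⁿ
    have sat : ∀ (u : Fin n → R) (a t : R), t ∈ nonZeroDivisors R →
        t • u = a • e → ∃ r : R, u = r • e := by
      intro u a t ht htu
      obtain ⟨w, hw⟩ := descendQ u t ht ⟨a • f e₀, by rw [map_smul, ← he, htu]⟩
      have h4 : f (a • e₀) = t • w := by
        apply hι
        simp only [map_smul, hw, htu, ← he]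
      obtain ⟨l, hl⟩ := descendM w t ht ⟨a • e₀, h4⟩
      -- now t • l = a • e₀
      have h8 : t • l = a • e₀ := by
        apply hf
        rw [map_smul, hl, h4]
      have h9 : t * p l = a := by
        have := congrArg p h8
        rwa [map_smul, map_smul, hps1, smul_eq_mul, smul_eq_mul, mul_one] at this
      have h10 : t • (l - (p l) • e₀) = 0 := by
        rw [smul_sub, h8, smul_smul, h9]
        exact sub_self _
      have h11 : l - (p l) • e₀ = 0 := aux_smul_cancel (tfL ht) h10
      have h12 : l = (p l) • e₀ := by rwa [sub_eq_zero] at h11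
      refine ⟨p l, ?_⟩
      rw [← hw, ← hl, show f l = f ((p l) • e₀) from congrArg f h12, map_smul, map_smul]
    -- socle element
    obtain ⟨c, hcx, hcm⟩ := aux_socle hdim hxm hxnzd
    have hdiv : ∀ i : Fin n, ∃ b : R, x * b = c * e i := by
      intro i
      obtain ⟨b, hb⟩ := Ideal.mem_span_singleton'.mp (hcm (e i) (hcoord i))
      exact ⟨b, by rw [mul_comm x b, hb, mul_comm c (e i)]⟩
    choose u hu using hdiv
    have hxu : x • u = c • e := by
      funext i
      simp only [Pi.smul_apply, smul_eq_mul]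
      exact hu i
    obtain ⟨r, hr⟩ := sat u c x hxnzd hxu
    have hce : (c - x * r) • e = 0 := by
      rw [sub_smul, ← smul_smul, ← hr, hxu, sub_self]
    have hcxr : c = x * r := sub_eq_zero.mp (hann _ hce)
    exact hcx (hcxr ▸ Ideal.mem_span_singleton'.mpr ⟨r, mul_comm r x⟩)

end AuxSection

/-- in an exact sequence `0 → L → M → N → 0` of maximal Cohen–Macaulay
modules, if `M` is a first syzygy of an MCM module without free summand then so is `L`. -/
theorem stmt8 (R : Type*) [CommRing R] [IsNoetherianRing R] [IsLocalRing R]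
    (hdim : ringKrullDim R = 1)
    (hdepth : ∃ x ∈ maximalIdeal R, x ∈ nonZeroDivisors R)
    (hsing : ¬ (maximalIdeal R).IsPrincipal)
    (hGor : GenericallyGorenstein R)
    (L M N : Type*) [AddCommGroup L] [Module R L] [AddCommGroup M] [Module R M]
    [AddCommGroup N] [Module R N]
    (hL : IsMCM R L) (hM : IsMCM R M) (hN : IsMCM R N)
    (f : L →ₗ[R] M) (g : M →ₗ[R] N)
    (hf : Function.Injective f) (hg : Function.Surjective g)
    (hexact : LinearMap.ker g = LinearMap.range f)
    (hMsyz : IsSyzygyOfMCM R M) (hMfree : ¬ HasFreeSummand R M) :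
    IsSyzygyOfMCM R L ∧ ¬ HasFreeSummand R L := by
  exact stmt8' R hdim hdepth L M N hL hN f g hf hg hexact hMsyz hMfree
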